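/- Let X be a real Banach space. Then every Banach space finitely representable in X is stable if and only if every Banach space finitely equivalent to X is stable. -/

import Mathlib

open Filter Bornology
set_option maxHeartbeats 1000000
set_option synthInstance.maxHeartbeats 400000


open scoped ENNReal ZeroAtInfty

/-- A bundled real Banach space. -/
structure BanachSpace where
  carrier : Type
  [g : NormedAddCommGroup carrier]
  [s : NormedSpace ℝ carrier]
  [c : CompleteSpace carrier]

attribute [instance] BanachSpace.g BanachSpace.s BanachSpace.c

instance : CoeSort BanachSpace Type := ⟨BanachSpace.carrier⟩

/-- `X` is finitely representable in `Y`: every finite-dimensional subspace of `X` is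
`(1+ε)`-isomorphic to a subspace of `Y`. -/
def FinRep (X : Type*) [NormedAddCommGroup X] [NormedSpace ℝ X]
    (Y : Type*) [NormedAddCommGroup Y] [NormedSpace ℝ Y] : Prop :=
  ∀ ε : ℝ, 0 < ε → ∀ A : Subspace ℝ X, FiniteDimensional ℝ A →
    ∃ B : Subspace ℝ Y, ∃ u : A ≃L[ℝ] B,
      ‖(u : A →L[ℝ] B)‖ * ‖(u.symm : B →L[ℝ] A)‖ ≤ 1 + ε

/-- `X` and `Y` are finitely equivalent. -/
def FinEquiv (X : Type*) [NormedAddCommGroup X] [NormedSpace ℝ X]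
    (Y : Type*) [NormedAddCommGroup Y] [NormedSpace ℝ Y] : Prop :=
  FinRep X Y ∧ FinRep Y X

/-- A stable Banach space: iterated ultrafilter limits of `‖x n + y m‖` commute, for all
bounded sequences. -/
def IsStable (X : Type*) [NormedAddCommGroup X] : Prop :=
  ∀ x y : ℕ → X, Bornology.IsBounded (Set.range x) → Bornology.IsBounded (Set.range y) →
    ∀ D E : Ultrafilter ℕ,
      limUnder (D : Filter ℕ) (fun n => limUnder (E : Filter ℕ) fun m => ‖x n + y m‖) =
        limUnder (E : Filter ℕ) (fun m => limUnder (D : Filter ℕ) fun n => ‖x n + y m‖)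



noncomputable section UltraPower

variable (X : Type) [NormedAddCommGroup X] [NormedSpace ℝ X]

/-- bounded sequences in X -/
abbrev LinfX : Type := ↥(lp (fun _ : ℕ => X) ∞)

variable (U : Ultrafilter ℕ)

/-- ultrafilter limits of bounded real sequences exist -/
theorem exists_ulim (f : ℕ → ℝ) (C : ℝ) (h : ∀ n, |f n| ≤ C) :
    ∃ L, Tendsto f (U : Filter ℕ) (nhds L) := by
  have hc : IsCompact (Set.Icc (-C) C) := isCompact_Icc
  have hle : (U.map f : Filter ℝ) ≤ Filter.principal (Set.Icc (-C) C) := by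
    rw [Ultrafilter.coe_map, Filter.le_principal_iff, Filter.mem_map]
    filter_upwards with n
    exact abs_le.mp (h n)
  obtain ⟨L, _, hL⟩ := hc.ultrafilter_le_nhds (U.map f) hle
  exact ⟨L, hL⟩

/-- the null subspace along U -/
def nullSub : Submodule ℝ (LinfX X) where
  carrier := {f | Tendsto (fun k => ‖f k‖) (U : Filter ℕ) (nhds 0)}
  zero_mem' := by
    simp only [Set.mem_setOf_eq, lp.coeFn_zero, Pi.zero_apply, norm_zero]
    exact tendsto_const_nhds
  add_mem' := by
    intro f g hf hg
    have h0 : Tendsto (fun k => ‖f k‖ + ‖g k‖) (U : Filter ℕ) (nhds 0) := by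
      simpa using hf.add hg
    refine squeeze_zero (fun k => norm_nonneg _) (fun k => ?_) h0
    rw [lp.coeFn_add]
    exact norm_add_le _ _
  smul_mem' := by
    intro c f hf
    have h0 : Tendsto (fun k => ‖c‖ * ‖f k‖) (U : Filter ℕ) (nhds 0) := by
      simpa using hf.const_mul ‖c‖
    refine squeeze_zero (fun k => norm_nonneg _) (fun k => ?_) h0
    rw [lp.coeFn_smul]
    simp [norm_smul]

theorem isClosed_nullSub : IsClosed ((nullSub X U : Submodule ℝ (LinfX X)) : Set (LinfX X)) := by
  rw [← closure_subset_iff_isClosed]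
  intro f hf
  show Tendsto (fun k => ‖f k‖) (U : Filter ℕ) (nhds 0)
  rw [Metric.tendsto_nhds]
  intro ε hε
  obtain ⟨g, hgN, hgd⟩ := Metric.mem_closure_iff.mp hf (ε / 2) (by linarith)
  have hgnull : Tendsto (fun k => ‖g k‖) (U : Filter ℕ) (nhds 0) := hgN
  have hev : ∀ᶠ k in (U : Filter ℕ), ‖g k‖ < ε / 2 := by
    have := Metric.tendsto_nhds.mp hgnull (ε / 2) (by linarith)
    filter_upwards [this] with k hk
    rw [Real.dist_eq, sub_zero] at hk
    exact lt_of_abs_lt hk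
  filter_upwards [hev] with k hk
  rw [Real.dist_eq, sub_zero, abs_of_nonneg (norm_nonneg _)]
  have h1 : ‖f k - g k‖ ≤ ‖f - g‖ := by
    have := lp.norm_apply_le_norm ENNReal.top_ne_zero (f - g) k
    rwa [lp.coeFn_sub, Pi.sub_apply] at this
  have h2 : ‖f - g‖ < ε / 2 := by rwa [dist_eq_norm] at hgd
  calc ‖f k‖ ≤ ‖f k - g k‖ + ‖g k‖ := by simpa using norm_add_le (f k - g k) (g k)
    _ < ε / 2 + ε / 2 := by linarith [h1.trans_lt h2]
    _ = ε := by ring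

/-- the ultrapower -/
def UP : Type := (LinfX X) ⧸ (nullSub X U)

instance : NormedAddCommGroup (UP X U) :=
  letI := isClosed_nullSub X U
  (Submodule.Quotient.normedAddCommGroup (nullSub X U) : NormedAddCommGroup ((LinfX X) ⧸ (nullSub X U)))

instance : NormedSpace ℝ (UP X U) :=
  (Submodule.Quotient.normedSpace (nullSub X U) ℝ : NormedSpace ℝ ((LinfX X) ⧸ (nullSub X U)))

instance [CompleteSpace X] : CompleteSpace (UP X U) :=
  (Submodule.Quotient.completeSpace (nullSub X U) : CompleteSpace ((LinfX X) ⧸ (nullSub X U)))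

/-- quotient map -/
def upMk (f : LinfX X) : UP X U := Submodule.Quotient.mk (p := nullSub X U) f

theorem upMk_add (f g : LinfX X) : upMk X U (f + g) = upMk X U f + upMk X U g := rfl

theorem norm_upMk_le (f : LinfX X) : ‖upMk X U f‖ ≤ ‖f‖ :=
  Submodule.Quotient.norm_mk_le (nullSub X U) f

theorem norm_apply_le (f : LinfX X) (k : ℕ) : ‖f k‖ ≤ ‖f‖ :=
  lp.norm_apply_le_norm ENNReal.top_ne_zero f k

theorem lp_norm_le (f : LinfX X) (C : ℝ) (hC : 0 ≤ C) (h : ∀ k, ‖f k‖ ≤ C) : ‖f‖ ≤ C := by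
  rw [lp.norm_eq_ciSup]
  exact ciSup_le h

/-- key: the quotient norm is the ultrafilter limit of the pointwise norms -/
theorem tendsto_norm_upMk (f : LinfX X) :
    Tendsto (fun k => ‖f k‖) (U : Filter ℕ) (nhds ‖upMk X U f‖) := by
  obtain ⟨L, hL⟩ := exists_ulim U (fun k => ‖f k‖) ‖f‖
    (fun k => by rw [abs_of_nonneg (norm_nonneg _)]; exact norm_apply_le X f k)
  have hL0 : 0 ≤ L := le_of_tendsto_of_tendsto' tendsto_const_nhds hL (fun k => norm_nonneg _)
  have key : ‖upMk X U f‖ = L := by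
    apply le_antisymm
    · -- ≤ : modify f on a large set
      refine le_of_forall_pos_le_add (fun δ hδ => ?_)
      have hS : {k | ‖f k‖ < L + δ} ∈ (U : Filter ℕ) :=
        hL.eventually_lt_const (by linarith)
      set S : Set ℕ := {k | ‖f k‖ < L + δ} with hSdef
      have hgmem : Memℓp (fun k => if k ∈ S then (0 : X) else f k) ∞ := by
        apply memℓp_infty
        refine ⟨‖f‖, ?_⟩
        rintro - ⟨k, rfl⟩
        by_cases h : k ∈ S <;> simp [h, norm_apply_le X f k]
      set g : LinfX X := ⟨fun k => if k ∈ S then (0 : X) else f k, hgmem⟩ with hgdef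
      have hgnull : g ∈ nullSub X U := by
        have : ∀ᶠ k in (U : Filter ℕ), ‖g k‖ = 0 := by
          filter_upwards [hS] with k hk
          simp [hgdef, hk]
        exact Tendsto.congr' (by filter_upwards [this] with k hk; exact hk.symm) tendsto_const_nhds
      have hmk : upMk X U f = upMk X U (f - g) := by
        rw [upMk, upMk]
        show (Submodule.Quotient.mk f : LinfX X ⧸ nullSub X U) = Submodule.Quotient.mk (f - g)
        rw [Submodule.Quotient.eq]
        simpa using hgnull
      have hbound : ‖f - g‖ ≤ L + δ := by
        apply lp_norm_le X _ _ (by linarith)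
        intro k
        rw [lp.coeFn_sub, Pi.sub_apply]
        by_cases h : k ∈ S
        · simp only [hgdef]
          simp only [h, if_pos]
          simpa using le_of_lt h
        · simp only [hgdef]
          simp only [h, if_neg, not_false_iff]
          simp [sub_self]
          linarith
      calc ‖upMk X U f‖ = ‖upMk X U (f - g)‖ := by rw [hmk]
        _ ≤ ‖f - g‖ := norm_upMk_le X U _
        _ ≤ L + δ := hbound
    · -- ≥
      refine le_of_forall_pos_le_add (fun δ hδ => ?_)
      obtain ⟨m, hm_eq, hm_lt⟩ := Submodule.Quotient.norm_mk_lt (upMk X U f) hδ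
      have hnull : m - f ∈ nullSub X U := by
        rw [← Submodule.Quotient.eq]
        exact hm_eq
      have h2 : Tendsto (fun k => ‖(m - f) k‖) (U : Filter ℕ) (nhds 0) := hnull
      have h3 : Tendsto (fun k => ‖f k‖ - ‖(m - f) k‖) (U : Filter ℕ) (nhds L) := by
        simpa using hL.sub h2
      have h4 : L ≤ ‖m‖ := by
        refine le_of_tendsto h3 ?_
        filter_upwards with k
        have he : (f : ℕ → X) k = m k - (m - f) k := by
          rw [lp.coeFn_sub, Pi.sub_apply]; abel
        have h5 : ‖f k‖ ≤ ‖m k‖ + ‖(m - f) k‖ := by rw [he]; exact norm_sub_le _ _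
        have hmk := norm_apply_le X m k
        linarith
      exact h4.trans hm_lt.le
  rwa [key]

theorem norm_upMk_eq_of_tendsto (f : LinfX X) (L : ℝ)
    (h : Tendsto (fun k => ‖f k‖) (U : Filter ℕ) (nhds L)) : ‖upMk X U f‖ = L :=
  tendsto_nhds_unique (tendsto_norm_upMk X U f) h

end UltraPower



noncomputable section FinRepFacts

theorem finRep_of_isometry {Y W : Type*} [NormedAddCommGroup Y] [NormedSpace ℝ Y]
    [NormedAddCommGroup W] [NormedSpace ℝ W] (j : Y →ₗᵢ[ℝ] W) : FinRep Y W := by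
  intro ε hε A hA
  have hinj : Function.Injective j.toLinearMap := j.injective
  let e : A ≃ₗ[ℝ] Submodule.map j.toLinearMap A := Submodule.equivMapOfInjective _ hinj A
  refine ⟨Submodule.map j.toLinearMap A, e.toContinuousLinearEquiv, ?_⟩
  have hnorm : ∀ a : A, ‖e a‖ = ‖a‖ := by
    intro a
    have : ((e a : Submodule.map j.toLinearMap A) : W) = j a := rfl
    calc ‖e a‖ = ‖((e a : _) : W)‖ := rfl
      _ = ‖j (a : Y)‖ := by rw [this]
      _ = ‖(a : Y)‖ := j.norm_map _
      _ = ‖a‖ := rfl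
  have h1 : ‖(e.toContinuousLinearEquiv : A →L[ℝ] Submodule.map j.toLinearMap A)‖ ≤ 1 := by
    refine ContinuousLinearMap.opNorm_le_bound _ zero_le_one (fun a => ?_)
    have : (e.toContinuousLinearEquiv : A →L[ℝ] _) a = e a := by
      rw [ContinuousLinearEquiv.coe_coe, LinearEquiv.coe_toContinuousLinearEquiv']
    rw [this, hnorm, one_mul]
  have h2 : ‖(e.toContinuousLinearEquiv.symm : Submodule.map j.toLinearMap A →L[ℝ] A)‖ ≤ 1 := by
    refine ContinuousLinearMap.opNorm_le_bound _ zero_le_one (fun b => ?_)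
    have hb : (e.toContinuousLinearEquiv.symm : _ →L[ℝ] A) b = e.symm b := by
      rw [ContinuousLinearEquiv.coe_coe, LinearEquiv.coe_toContinuousLinearEquiv_symm']
    rw [hb, one_mul]
    have := hnorm (e.symm b)
    rw [e.apply_symm_apply] at this
    rw [← this]
  nlinarith [mul_le_mul h1 h2 (norm_nonneg (e.toContinuousLinearEquiv.symm : Submodule.map j.toLinearMap A →L[ℝ] A)) zero_le_one]

variable (X : Type) [NormedAddCommGroup X] [NormedSpace ℝ X] (U : Ultrafilter ℕ)

/-- constant sequences, as a linear map into `ℓ∞(X)`. -/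
def constL : X →ₗ[ℝ] LinfX X where
  toFun x := ⟨fun _ => x, memℓp_infty ⟨‖x‖, by rintro - ⟨k, rfl⟩; exact le_rfl⟩⟩
  map_add' x y := by apply lp.ext; rfl
  map_smul' c x := by apply lp.ext; rfl

theorem constL_apply (x : X) (k : ℕ) : (constL X x : ℕ → X) k = x := rfl

/-- the diagonal embedding into the ultrapower is an isometry -/
def upDiag : X →ₗᵢ[ℝ] UP X U where
  toLinearMap := (nullSub X U).mkQ.comp (constL X)
  norm_map' := by
    intro x
    show ‖upMk X U (constL X x)‖ = ‖x‖
    refine norm_upMk_eq_of_tendsto X U _ _ ?_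
    simp only [constL_apply]
    exact tendsto_const_nhds

theorem finRep_self_up : FinRep X (UP X U) := finRep_of_isometry (upDiag X U)

end FinRepFacts

noncomputable section Hard

variable (X : Type) [NormedAddCommGroup X] [NormedSpace ℝ X] (U : Ultrafilter ℕ)

/-- evaluation at `k` as a linear map -/
def evalL (k : ℕ) : LinfX X →ₗ[ℝ] X where
  toFun f := f k
  map_add' f g := by
    show (↑(f + g) : ℕ → X) k = (↑f : ℕ → X) k + (↑g : ℕ → X) k
    rw [lp.coeFn_add, Pi.add_apply]
  map_smul' c f := by
    show (↑(c • f) : ℕ → X) k = c • (↑f : ℕ → X) k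
    rw [lp.coeFn_smul, Pi.smul_apply]

theorem finRep_up_self : FinRep (UP X U) X := by
  intro ε hε A hA
  set ε' : ℝ := min (ε / 4) (1 / 2) with hε'def
  have hε'pos : 0 < ε' := lt_min (by linarith) (by norm_num)
  have hε'le : ε' ≤ ε / 4 := min_le_left _ _
  have hε'half : ε' ≤ 1 / 2 := min_le_right _ _
  haveI := hA
  -- a linear section σ of the quotient map on A
  let b : Module.Basis (Fin (Module.finrank ℝ A)) ℝ A := Module.finBasis ℝ A
  let σ : A →ₗ[ℝ] LinfX X := b.constr ℝ (fun i => Quotient.out (b i : UP X U))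
  have hσ : ∀ a : A, upMk X U (σ a) = (a : UP X U) := by
    have hext : (nullSub X U).mkQ.comp σ = A.subtype := by
      apply b.ext
      intro i
      show upMk X U (σ (b i)) = (b i : UP X U)
      have : σ (b i) = Quotient.out (b i : UP X U) := b.constr_basis ℝ _ i
      rw [this]
      exact Quotient.out_eq _
    intro a
    exact LinearMap.congr_fun hext a
  let σc : A →L[ℝ] LinfX X := LinearMap.toContinuousLinearMap σ
  set C : ℝ := ‖σc‖ with hCdef
  have hC0 : 0 ≤ C := by rw [hCdef]; exact norm_nonneg σc
  have hbound : ∀ (a : A) (k : ℕ), ‖(σ a : ℕ → X) k‖ ≤ C * ‖a‖ := by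
    intro a k
    refine (norm_apply_le X (σ a) k).trans ?_
    have h := σc.le_opNorm a
    have hac : σc a = σ a := rfl
    rw [hac] at h
    rw [hCdef]
    exact h
  have hlim : ∀ a : A, Tendsto (fun k => ‖(σ a : ℕ → X) k‖) (U : Filter ℕ) (nhds ‖a‖) := by
    intro a
    have h := tendsto_norm_upMk X U (σ a)
    rwa [hσ a] at h
  set δ : ℝ := ε' / (C + 1) with hδdef
  have hδpos : 0 < δ := div_pos hε'pos (by linarith)
  have hδC : (C + 1) * δ = ε' := by
    rw [hδdef]; field_simp
  -- a finite δ-net of the unit sphere of A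
  have hcpt : IsCompact (Metric.sphere (0 : A) 1) := isCompact_sphere 0 1
  obtain ⟨t, hts, htfin, htcover⟩ :=
    Metric.finite_approx_of_totallyBounded hcpt.totallyBounded δ hδpos
  -- a good index k₀
  have hWmem : ∀ a ∈ t, {k : ℕ | |‖(σ a : ℕ → X) k‖ - 1| < δ} ∈ (U : Filter ℕ) := by
    intro a hat
    have ha1 : ‖a‖ = 1 := mem_sphere_zero_iff_norm.mp (hts hat)
    have h := (Metric.tendsto_nhds.mp (hlim a)) δ hδpos
    rw [ha1] at h
    filter_upwards [h] with k hk
    rwa [Real.dist_eq] at hk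
  have hW : (⋂ a ∈ t, {k : ℕ | |‖(σ a : ℕ → X) k‖ - 1| < δ}) ∈ (U : Filter ℕ) :=
    (Filter.biInter_mem htfin).mpr hWmem
  obtain ⟨k₀, hk₀⟩ := Filter.nonempty_of_mem hW
  -- uniform two-sided bound on the sphere
  have hsphere : ∀ a : A, ‖a‖ = 1 → |‖(σ a : ℕ → X) k₀‖ - 1| ≤ ε' := by
    intro a ha
    have hmem : a ∈ Metric.sphere (0 : A) 1 := mem_sphere_zero_iff_norm.mpr ha
    obtain ⟨a', ha't, haball⟩ := Set.mem_iUnion₂.mp (htcover hmem)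
    have hd : ‖a - a'‖ < δ := by rwa [Metric.mem_ball, dist_eq_norm] at haball
    have h1 : |‖(σ a : ℕ → X) k₀‖ - ‖(σ a' : ℕ → X) k₀‖| ≤ C * δ := by
      have hsub : ‖(σ a : ℕ → X) k₀ - (σ a' : ℕ → X) k₀‖ ≤ C * ‖a - a'‖ := by
        have h := hbound (a - a') k₀
        rw [map_sub, lp.coeFn_sub, Pi.sub_apply] at h
        exact h
      refine (abs_norm_sub_norm_le _ _).trans (hsub.trans ?_)
      nlinarith
    have h2 : |‖(σ a' : ℕ → X) k₀‖ - 1| < δ := Set.mem_iInter₂.mp hk₀ a' ha't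
    calc |‖(σ a : ℕ → X) k₀‖ - 1|
        ≤ |‖(σ a : ℕ → X) k₀‖ - ‖(σ a' : ℕ → X) k₀‖| + |‖(σ a' : ℕ → X) k₀‖ - 1| := by
          have := abs_sub_abs_le_abs_sub (‖(σ a : ℕ → X) k₀‖ - 1) (‖(σ a' : ℕ → X) k₀‖ - 1)
          calc |‖(σ a : ℕ → X) k₀‖ - 1|
              = |(‖(σ a : ℕ → X) k₀‖ - ‖(σ a' : ℕ → X) k₀‖) + (‖(σ a' : ℕ → X) k₀‖ - 1)| := by
                ring_nf
            _ ≤ _ := abs_add_le _ _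
      _ ≤ C * δ + δ := by linarith
      _ = (C + 1) * δ := by ring
      _ = ε' := hδC
  -- homogeneous two-sided bound
  have hTbound : ∀ a : A,
      (1 - ε') * ‖a‖ ≤ ‖(σ a : ℕ → X) k₀‖ ∧ ‖(σ a : ℕ → X) k₀‖ ≤ (1 + ε') * ‖a‖ := by
    intro a
    rcases eq_or_ne a 0 with rfl | ha
    · rw [map_zero]
      have : ((0 : LinfX X) : ℕ → X) k₀ = 0 := by rw [lp.coeFn_zero]; rfl
      rw [this]
      simp
    · have hna : (0 : ℝ) < ‖a‖ := norm_pos_iff.mpr ha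
      set a₁ : A := ‖a‖⁻¹ • a with ha₁def
      have ha₁ : ‖a₁‖ = 1 := by
        rw [ha₁def, norm_smul, norm_inv, norm_norm, inv_mul_cancel₀ hna.ne']
      have hs := hsphere a₁ ha₁
      have hval : ‖(σ a₁ : ℕ → X) k₀‖ = ‖a‖⁻¹ * ‖(σ a : ℕ → X) k₀‖ := by
        rw [ha₁def, map_smul, lp.coeFn_smul, Pi.smul_apply, norm_smul, norm_inv, norm_norm]
      rw [hval, abs_le] at hs
      constructor
      · have := hs.1
        have h' : (1 - ε') * ‖a‖ ≤ (‖a‖⁻¹ * ‖(σ a : ℕ → X) k₀‖) * ‖a‖ := by nlinarith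
        rwa [mul_comm (‖a‖⁻¹) _, mul_assoc, inv_mul_cancel₀ hna.ne', mul_one] at h'
      · have := hs.2
        have h' : (‖a‖⁻¹ * ‖(σ a : ℕ → X) k₀‖) * ‖a‖ ≤ (1 + ε') * ‖a‖ := by nlinarith
        rwa [mul_comm (‖a‖⁻¹) _, mul_assoc, inv_mul_cancel₀ hna.ne', mul_one] at h'
  set T : A →ₗ[ℝ] X := (evalL X k₀).comp σ with hTdef
  have hTapp : ∀ a : A, T a = (σ a : ℕ → X) k₀ := fun a => rfl
  have hTinj : Function.Injective T := by
    intro a a' h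
    have h0 : ‖T (a - a')‖ = 0 := by rw [map_sub, sub_eq_zero.mpr h, norm_zero]
    have h1 := (hTbound (a - a')).1
    rw [← hTapp, h0] at h1
    have : ‖a - a'‖ ≤ 0 := by nlinarith [norm_nonneg (a - a')]
    have : a - a' = 0 := by
      rw [← norm_le_zero_iff]; exact this
    exact sub_eq_zero.mp this
  let e : A ≃ₗ[ℝ] LinearMap.range T := LinearEquiv.ofInjective T hTinj
  refine ⟨LinearMap.range T, e.toContinuousLinearEquiv, ?_⟩
  have hee : ∀ a : A, ‖e a‖ = ‖T a‖ := by
    intro a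
    have : ((e a : LinearMap.range T) : X) = T a := LinearEquiv.ofInjective_apply T a
    calc ‖e a‖ = ‖((e a : _) : X)‖ := rfl
      _ = ‖T a‖ := by rw [this]
  have h1 : ‖(e.toContinuousLinearEquiv : A →L[ℝ] LinearMap.range T)‖ ≤ 1 + ε' := by
    refine ContinuousLinearMap.opNorm_le_bound _ (by linarith) (fun a => ?_)
    have hcoe : (e.toContinuousLinearEquiv : A →L[ℝ] LinearMap.range T) a = e a := by
      rw [ContinuousLinearEquiv.coe_coe]
      exact congrFun (LinearEquiv.coe_toContinuousLinearEquiv' e) a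
    rw [hcoe, hee, hTapp]
    exact (hTbound a).2
  have h2 : ‖(e.toContinuousLinearEquiv.symm : LinearMap.range T →L[ℝ] A)‖ ≤ 1 + 2 * ε' := by
    refine ContinuousLinearMap.opNorm_le_bound _ (by linarith) (fun bb => ?_)
    have hcoe : (e.toContinuousLinearEquiv.symm : LinearMap.range T →L[ℝ] A) bb = e.symm bb := by
      rw [ContinuousLinearEquiv.coe_coe]
      exact congrFun (LinearEquiv.coe_toContinuousLinearEquiv_symm' e) bb
    rw [hcoe]
    have hb : ‖bb‖ = ‖T (e.symm bb)‖ := by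
      rw [← hee, e.apply_symm_apply]
    have hlow := (hTbound (e.symm bb)).1
    rw [← hTapp] at hlow
    have h3 : (1 - ε') * ‖e.symm bb‖ ≤ ‖bb‖ := by rw [hb]; exact hlow
    nlinarith [mul_le_mul_of_nonneg_left h3 (show (0:ℝ) ≤ 1 + 2 * ε' by linarith),
      mul_nonneg (mul_nonneg hε'pos.le (show (0:ℝ) ≤ 1 - 2 * ε' by linarith))
        (norm_nonneg (e.symm bb))]
  have hprod := mul_le_mul h1 h2 (ContinuousLinearMap.opNorm_nonneg _) (by linarith)
  nlinarith [hprod, mul_nonneg hε'pos.le hε'pos.le,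
    mul_le_mul_of_nonneg_left hε'half hε'pos.le]

end Hard

noncomputable section Main

theorem exists_good_map {Y : Type*} [NormedAddCommGroup Y] [NormedSpace ℝ Y]
    {X : Type} [NormedAddCommGroup X] [NormedSpace ℝ X]
    (hY : FinRep Y X) (δ : ℝ) (hδ : 0 < δ) (A : Subspace ℝ Y) (hA : FiniteDimensional ℝ A) :
    ∃ v : A →L[ℝ] X, (∀ a, ‖v a‖ ≤ ‖a‖) ∧ (∀ a, ‖a‖ ≤ (1 + δ) * ‖v a‖) := by
  obtain ⟨B, u, hu⟩ := hY δ hδ A hA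
  by_cases hz : ‖(u : A →L[ℝ] B)‖ = 0
  · refine ⟨0, fun a => by simp, fun a => ?_⟩
    have hu0 : (u : A →L[ℝ] B) = 0 := by rwa [ContinuousLinearMap.opNorm_zero_iff] at hz
    have hua : u a = 0 := by
      have h := ContinuousLinearMap.ext_iff.mp hu0 a
      simpa using h
    have ha : a = 0 := by
      have h := u.symm_apply_apply a
      rw [hua, map_zero] at h
      exact h.symm
    simp [ha]
  · have hc : 0 < ‖(u : A →L[ℝ] B)‖ := lt_of_le_of_ne (ContinuousLinearMap.opNorm_nonneg _) (Ne.symm hz)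
    set c : ℝ := ‖(u : A →L[ℝ] B)‖ with hcdef
    refine ⟨c⁻¹ • (B.subtypeL.comp (u : A →L[ℝ] B)), ?_, ?_⟩
    · intro a
      have hval : ‖(c⁻¹ • (B.subtypeL.comp (u : A →L[ℝ] B))) a‖ = c⁻¹ * ‖u a‖ := by
        rw [ContinuousLinearMap.smul_apply, norm_smul, norm_inv, Real.norm_eq_abs,
          abs_of_pos hc]
        rfl
      rw [hval]
      have h := (u : A →L[ℝ] B).le_opNorm a
      rw [inv_mul_le_iff₀ hc]
      exact h
    · intro a
      have hval : ‖(c⁻¹ • (B.subtypeL.comp (u : A →L[ℝ] B))) a‖ = c⁻¹ * ‖u a‖ := by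
        rw [ContinuousLinearMap.smul_apply, norm_smul, norm_inv, Real.norm_eq_abs,
          abs_of_pos hc]
        rfl
      rw [hval]
      have h1 : ‖a‖ ≤ ‖(u.symm : B →L[ℝ] A)‖ * ‖u a‖ := by
        simpa using (u.symm : B →L[ℝ] A).le_opNorm (u a)
      have h2 : ‖(u.symm : B →L[ℝ] A)‖ * ‖u a‖ ≤ (1 + δ) * (c⁻¹ * ‖u a‖) := by
        have hne : c * (c⁻¹ * ‖u a‖) = ‖u a‖ := by
          field_simp
        calc ‖(u.symm : B →L[ℝ] A)‖ * ‖u a‖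
            = (c * ‖(u.symm : B →L[ℝ] A)‖) * (c⁻¹ * ‖u a‖) := by
              field_simp
          _ ≤ (1 + δ) * (c⁻¹ * ‖u a‖) := by
              have hprod : c * ‖(u.symm : B →L[ℝ] A)‖ ≤ 1 + δ := hu
              have hnn : 0 ≤ c⁻¹ * ‖u a‖ := by positivity
              exact mul_le_mul_of_nonneg_right hprod hnn
      linarith
  end Main

/-- Every Banach space finitely representable in `X` is stable iff every Banach space
finitely equivalent to `X` is stable. -/
theorem forall_finRep_stable_iff_forall_finEquiv_stable
    (X : Type) [NormedAddCommGroup X] [NormedSpace ℝ X] [CompleteSpace X] :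
    (∀ Y : BanachSpace, FinRep Y.carrier X → IsStable Y.carrier) ↔
      (∀ Y : BanachSpace, FinEquiv X Y.carrier → IsStable Y.carrier) := by
  constructor
  · intro h Y hY
    exact h Y hY.2
  · intro h Y hY
    intro x y hx hy D E
    classical
    -- a nonprincipal ultrafilter on ℕ
    haveI : (Filter.cofinite : Filter ℕ).NeBot := by
      rw [Nat.cofinite_eq_atTop]; exact Filter.atTop_neBot
    let U : Ultrafilter ℕ := Ultrafilter.of Filter.cofinite
    have hUatTop : (U : Filter ℕ) ≤ Filter.atTop := by
      rw [← Nat.cofinite_eq_atTop]; exact Ultrafilter.of_le _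
    -- the ultrapower is stable
    have hZstable : IsStable (UP X U) :=
      h ⟨UP X U⟩ ⟨finRep_self_up X U, finRep_up_self X U⟩
    -- bounds
    obtain ⟨Cx, hCx⟩ := isBounded_iff_forall_norm_le.mp hx
    obtain ⟨Cy, hCy⟩ := isBounded_iff_forall_norm_le.mp hy
    -- the finite-dimensional subspaces
    let Asub : ℕ → Subspace ℝ Y.carrier := fun k =>
      Submodule.span ℝ ((x '' Set.Iic k) ∪ (y '' Set.Iic k))
    have hAfd : ∀ k, FiniteDimensional ℝ (Asub k) := fun k =>
      FiniteDimensional.span_of_finite ℝ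
        (((Set.finite_Iic k).image x).union ((Set.finite_Iic k).image y))
    have hxmem : ∀ n k, n ≤ k → x n ∈ Asub k := fun n k hnk =>
      Submodule.subset_span (Or.inl ⟨n, hnk, rfl⟩)
    have hymem : ∀ m k, m ≤ k → y m ∈ Asub k := fun m k hmk =>
      Submodule.subset_span (Or.inr ⟨m, hmk, rfl⟩)
    -- good almost-isometric maps into X
    have hv : ∀ k : ℕ, ∃ v : Asub k →L[ℝ] X,
        (∀ a, ‖v a‖ ≤ ‖a‖) ∧ (∀ a, ‖a‖ ≤ (1 + 1 / (k + 1)) * ‖v a‖) := fun k =>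
      exists_good_map hY (1 / (k + 1)) (by positivity) (Asub k) (hAfd k)
    choose v hv1 hv2 using hv
    -- the transferred sequences
    let Fx : ℕ → ℕ → X := fun n k => if h : x n ∈ Asub k then v k ⟨x n, h⟩ else 0
    let Fy : ℕ → ℕ → X := fun m k => if h : y m ∈ Asub k then v k ⟨y m, h⟩ else 0
    have hFxnorm : ∀ n k, ‖Fx n k‖ ≤ ‖x n‖ := by
      intro n k
      by_cases h : x n ∈ Asub k
      · simp only [Fx, dif_pos h]
        exact hv1 k ⟨x n, h⟩
      · simp [Fx, dif_neg h]
    have hFynorm : ∀ m k, ‖Fy m k‖ ≤ ‖y m‖ := by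
      intro m k
      by_cases h : y m ∈ Asub k
      · simp only [Fy, dif_pos h]
        exact hv1 k ⟨y m, h⟩
      · simp [Fy, dif_neg h]
    have hFxmem : ∀ n, Memℓp (Fx n) ∞ := fun n =>
      memℓp_infty ⟨‖x n‖, by rintro - ⟨k, rfl⟩; exact hFxnorm n k⟩
    have hFymem : ∀ m, Memℓp (Fy m) ∞ := fun m =>
      memℓp_infty ⟨‖y m‖, by rintro - ⟨k, rfl⟩; exact hFynorm m k⟩
    let x' : ℕ → UP X U := fun n => upMk X U ⟨Fx n, hFxmem n⟩
    let y' : ℕ → UP X U := fun m => upMk X U ⟨Fy m, hFymem m⟩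
    -- the key norm identity
    have key : ∀ n m, ‖x' n + y' m‖ = ‖x n + y m‖ := by
      intro n m
      show ‖upMk X U ⟨Fx n, hFxmem n⟩ + upMk X U ⟨Fy m, hFymem m⟩‖ = ‖x n + y m‖
      rw [← upMk_add]
      refine norm_upMk_eq_of_tendsto X U _ _ ?_
      refine Tendsto.mono_left ?_ hUatTop
      refine tendsto_of_tendsto_of_tendsto_of_le_of_le'
        (g := fun k : ℕ => (1 + 1 / ((k : ℝ) + 1))⁻¹ * ‖x n + y m‖)
        (h := fun _ : ℕ => ‖x n + y m‖) ?_ ?_ ?_ ?_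
      · have h0 : Filter.Tendsto (fun k : ℕ => (1 + 1 / ((k : ℝ) + 1))⁻¹)
            Filter.atTop (nhds 1) := by
          have h1 : Filter.Tendsto (fun k : ℕ => 1 + 1 / ((k : ℝ) + 1))
              Filter.atTop (nhds 1) := by
            have : Tendsto (fun n : ℕ => 1 / ((n : ℝ) + 1)) atTop (nhds 0) :=
              tendsto_one_div_add_atTop_nhds_zero_nat
            have h2 := this.const_add (1 : ℝ)
            simpa using h2
          have h3 := h1.inv₀ (by norm_num)
          simpa using h3
        have h4 := h0.mul_const ‖x n + y m‖
        simpa using h4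
      · exact tendsto_const_nhds
      · -- eventual lower bound
        filter_upwards [Filter.eventually_ge_atTop (max n m)] with k hk
        have hxk : x n ∈ Asub k := hxmem n k (le_trans (le_max_left n m) hk)
        have hyk : y m ∈ Asub k := hymem m k (le_trans (le_max_right n m) hk)
        have hsum : x n + y m ∈ Asub k := Submodule.add_mem _ hxk hyk
        have happ : ((⟨Fx n, hFxmem n⟩ + ⟨Fy m, hFymem m⟩ : LinfX X) : ℕ → X) k
            = v k ⟨x n + y m, hsum⟩ := by
          rw [lp.coeFn_add, Pi.add_apply]
          show Fx n k + Fy m k = _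
          simp only [Fx, Fy, dif_pos hxk, dif_pos hyk]
          rw [← map_add]
          rfl
        rw [happ]
        have hpos : (0 : ℝ) < 1 + 1 / ((k : ℝ) + 1) := by positivity
        rw [inv_mul_le_iff₀ hpos]
        have h := hv2 k ⟨x n + y m, hsum⟩
        exact h
      · -- eventual upper bound
        filter_upwards [Filter.eventually_ge_atTop (max n m)] with k hk
        have hxk : x n ∈ Asub k := hxmem n k (le_trans (le_max_left n m) hk)
        have hyk : y m ∈ Asub k := hymem m k (le_trans (le_max_right n m) hk)
        have hsum : x n + y m ∈ Asub k := Submodule.add_mem _ hxk hyk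
        have happ : ((⟨Fx n, hFxmem n⟩ + ⟨Fy m, hFymem m⟩ : LinfX X) : ℕ → X) k
            = v k ⟨x n + y m, hsum⟩ := by
          rw [lp.coeFn_add, Pi.add_apply]
          show Fx n k + Fy m k = _
          simp only [Fx, Fy, dif_pos hxk, dif_pos hyk]
          rw [← map_add]
          rfl
        rw [happ]
        exact hv1 k ⟨x n + y m, hsum⟩
    -- boundedness of the transferred sequences
    have hbx : Bornology.IsBounded (Set.range x') := by
      rw [isBounded_iff_forall_norm_le]
      refine ⟨Cx, ?_⟩
      rintro - ⟨n, rfl⟩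
      calc ‖x' n‖ ≤ ‖(⟨Fx n, hFxmem n⟩ : LinfX X)‖ := norm_upMk_le X U _
        _ ≤ ‖x n‖ := lp_norm_le X _ _ (norm_nonneg _) (fun k => hFxnorm n k)
        _ ≤ Cx := hCx _ ⟨n, rfl⟩
    have hby : Bornology.IsBounded (Set.range y') := by
      rw [isBounded_iff_forall_norm_le]
      refine ⟨Cy, ?_⟩
      rintro - ⟨m, rfl⟩
      calc ‖y' m‖ ≤ ‖(⟨Fy m, hFymem m⟩ : LinfX X)‖ := norm_upMk_le X U _
        _ ≤ ‖y m‖ := lp_norm_le X _ _ (norm_nonneg _) (fun k => hFynorm m k)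
        _ ≤ Cy := hCy _ ⟨m, rfl⟩
    have hst := hZstable x' y' hbx hby D E
    simp only [key] at hst
    exact hst
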